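/- Let Γ be an even unimodular lattice, Z ⊆ Γ ⊗ ℝ a subspace, L_Π = Γ ∩ Z⊥ and L^Π = Γ ∩ (L_Π)⊥ (both primitive sublattices, orthogonal complements of each other, with L_Π nondegenerate). Then the subgroup G of O(Γ) fixing Z pointwise is isomorphic to the group O⁰(L_Π) of automorphisms of L_Π acting trivially on the discriminant group (L_Π)*/L_Π. -/

import Mathlib

/-- The dual lattice `L* = {x ∈ L ⊗ ℚ : (x,y) ∈ ℤ for all y ∈ L}`, realised inside
the ambient rational vector space. -/
def dualLat {V : Type*} [AddCommGroup V] [Module ℚ V]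
    (B : V →ₗ[ℚ] V →ₗ[ℚ] ℚ) (L : Submodule ℤ V) : Submodule ℤ V where
  carrier := {x | x ∈ Submodule.span ℚ (L : Set V) ∧ ∀ y ∈ L, ∃ n : ℤ, B x y = (n : ℚ)}
  zero_mem' := ⟨Submodule.zero_mem _, fun y _ => ⟨0, by simp⟩⟩
  add_mem' := by
    rintro a b ⟨ha1, ha2⟩ ⟨hb1, hb2⟩
    refine ⟨Submodule.add_mem _ ha1 hb1, fun y hy => ?_⟩
    obtain ⟨m, hm⟩ := ha2 y hy
    obtain ⟨k, hk⟩ := hb2 y hy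
    refine ⟨m + k, ?_⟩
    rw [map_add, LinearMap.add_apply, hm, hk]
    push_cast; ring
  smul_mem' := by
    rintro n x ⟨hx1, hx2⟩
    have h : (n : ℤ) • x = ((n : ℚ)) • x := (Int.cast_smul_eq_zsmul ℚ n x).symm
    constructor
    · rw [h]; exact Submodule.smul_mem _ _ hx1
    · intro y hy
      obtain ⟨m, hm⟩ := hx2 y hy
      refine ⟨n * m, ?_⟩
      rw [h, map_smul, LinearMap.smul_apply, hm, smul_eq_mul]
      push_cast; ring

/-- A vector `s` of a lattice `L` is primitive if it is not a multiple `m • w`,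
`m > 1`, of another lattice vector `w`. -/
def IsPrimitiveIn {V : Type*} [AddCommGroup V] [Module ℚ V]
    (L : Submodule ℤ V) (s : V) : Prop :=
  s ∈ L ∧ ¬ ∃ (m : ℤ) (w : V), w ∈ L ∧ 1 < m ∧ s = (m : ℚ) • w

/-- `g` is an automorphism of the unimodular lattice `Γ` preserving the bilinear
form and fixing the subspace `Z` pointwise. -/
def StabCond {V : Type*} [AddCommGroup V] [Module ℚ V]
    (B : V →ₗ[ℚ] V →ₗ[ℚ] ℚ) (Γ : Submodule ℤ V) (Z : Submodule ℚ V)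
    (g : V ≃ₗ[ℚ] V) : Prop :=
  (∀ x ∈ Γ, g x ∈ Γ) ∧ (∀ x ∈ Γ, g.symm x ∈ Γ) ∧
  (∀ x y : V, B (g x) (g y) = B x y) ∧ (∀ z ∈ Z, g z = z)

/-- `h` is an automorphism of the lattice `LPi` (realised on its rational span `W`)
preserving the form and acting trivially on the discriminant group `LPi*/LPi`,
i.e. `h ∈ O⁰(L_Π)`. -/
def DiscTrivCond {V : Type*} [AddCommGroup V] [Module ℚ V]
    (B : V →ₗ[ℚ] V →ₗ[ℚ] ℚ) (LPi : Submodule ℤ V) (W : Submodule ℚ V)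
    (h : ↥W ≃ₗ[ℚ] ↥W) : Prop :=
  (∀ x : ↥W, (↑x : V) ∈ LPi → (↑(h x) : V) ∈ LPi) ∧
  (∀ x : ↥W, (↑x : V) ∈ LPi → (↑(h.symm x) : V) ∈ LPi) ∧
  (∀ x y : ↥W, B (↑(h x) : V) (↑(h y) : V) = B (↑x : V) (↑y : V)) ∧
  (∀ x : ↥W, (∀ y ∈ LPi, ∃ k : ℤ, B (↑x : V) y = (k : ℚ)) →
    (↑(h x) : V) - (↑x : V) ∈ LPi)

/-!
Write `W = Z⊥`, so that `L_Π = Γ ∩ W` spans `W` and `V = W ⊕ Z`; the isomorphism is restriction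
to `W`, with inverse the extension by the identity on `Z`. Since `Γ` is unimodular and `L_Π` is
primitive, every functional `L_Π → ℤ` extends to `Γ` and is then of the form `B v` with `v ∈ Γ`:
every `x ∈ L_Π*` is the `W`-component of some `x + z ∈ Γ`, `z ∈ Z`. Hence a symmetry `g` fixing
`Z` satisfies `g x - x = g (x + z) - (x + z) ∈ Γ ∩ W = L_Π`. Conversely the `W`-component `w` of
any `v ∈ Γ` lies in `L_Π*`, so the extension of `h ∈ O⁰(L_Π)` moves `v` by `h w - w ∈ L_Π ⊆ Γ`.
-/

open Submodule LinearMap.BilinForm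

section Lattice

variable {V : Type*} [AddCommGroup V] [Module ℚ V]

theorem isLocalizedModule_subtype_of_span_eq_top {Γ : Submodule ℤ V}
    (hspan : span ℚ (Γ : Set V) = ⊤) : IsLocalizedModule (nonZeroDivisors ℤ) Γ.subtype := by
  have := isLocalizedModule_id (S := nonZeroDivisors ℤ) V ℚ
  have htop : Γ.localized' ℚ (nonZeroDivisors ℤ) LinearMap.id = ⊤ := by
    rw [localized'_eq_span, LinearMap.id_coe, Set.image_id, hspan]
  have hbij : Function.Bijective
      ((Γ.localized' ℚ (nonZeroDivisors ℤ) LinearMap.id).subtype.restrictScalars ℤ) :=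
    ⟨Subtype.val_injective, fun v => ⟨⟨v, htop ▸ trivial⟩, rfl⟩⟩
  exact (IsLocalizedModule.comp_iff_of_bijective_left (S := nonZeroDivisors ℤ) _ hbij).2
    (Γ.isLocalizedModule ℚ (nonZeroDivisors ℤ) LinearMap.id)

theorem exists_int_smul_mem_of_span_eq_top {Γ : Submodule ℤ V}
    (hspan : span ℚ (Γ : Set V) = ⊤) (v : V) : ∃ n : ℤ, n ≠ 0 ∧ n • v ∈ Γ := by
  have := isLocalizedModule_subtype_of_span_eq_top hspan
  obtain ⟨⟨γ, n⟩, h⟩ := IsLocalizedModule.surj (nonZeroDivisors ℤ) Γ.subtype v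
  exact ⟨n, nonZeroDivisors.coe_ne_zero n, h ▸ γ.2⟩

theorem exists_extend_of_span_eq_top {Γ : Submodule ℤ V}
    (hspan : span ℚ (Γ : Set V) = ⊤) (F : Γ →ₗ[ℤ] ℚ) :
    ∃ φ : V →ₗ[ℚ] ℚ, ∀ γ : Γ, φ γ = F γ := by
  have := isLocalizedModule_subtype_of_span_eq_top hspan
  have hunit := (isLocalizedModule_id (S := nonZeroDivisors ℤ) ℚ ℚ).map_units
  exact ⟨(IsLocalizedModule.lift _ Γ.subtype F hunit).extendScalarsOfIsLocalization
    (nonZeroDivisors ℤ) ℚ, IsLocalizedModule.lift_apply _ Γ.subtype F hunit⟩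

theorem mem_of_int_smul_mem {U : Submodule ℚ V} {v : V} {n : ℤ} (hn : n ≠ 0)
    (h : n • v ∈ U) : v ∈ U := by
  rw [← Int.cast_smul_eq_zsmul ℚ] at h
  simpa [hn] using U.smul_mem (n : ℚ)⁻¹ h

theorem isTorsionFree_quotient_comap_restrictScalars (Γ : Submodule ℤ V) (U : Submodule ℚ V) :
    Module.IsTorsionFree ℤ (Γ ⧸ (U.restrictScalars ℤ).comap Γ.subtype) :=
  .of_smul_eq_zero fun n x hx => by
    obtain ⟨γ, rfl⟩ := Submodule.Quotient.mk_surjective _ x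
    rw [← Quotient.mk_smul, Quotient.mk_eq_zero] at hx
    rw [Quotient.mk_eq_zero]
    exact or_iff_not_imp_left.2 fun hn => mem_of_int_smul_mem hn hx

theorem span_inf_restrictScalars_eq {Γ : Submodule ℤ V} (hspan : span ℚ (Γ : Set V) = ⊤)
    (U : Submodule ℚ V) : span ℚ ((Γ ⊓ U.restrictScalars ℤ : Submodule ℤ V) : Set V) = U := by
  refine le_antisymm (span_le.2 fun x hx => hx.2) fun v hv => ?_
  obtain ⟨n, hn, hnv⟩ := exists_int_smul_mem_of_span_eq_top hspan v
  have hnv' : n • v ∈ span ℚ ((Γ ⊓ U.restrictScalars ℤ : Submodule ℤ V) : Set V) :=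
    subset_span ⟨hnv, U.smul_of_tower_mem n hv⟩
  exact mem_of_int_smul_mem hn hnv'

end Lattice

theorem Submodule.exists_retraction_of_isTorsionFree_quotient {R M : Type*} [CommRing R]
    [IsDomain R] [IsPrincipalIdealRing R] [AddCommGroup M] [Module R M] [Module.Finite R M]
    (N : Submodule R M) [Module.IsTorsionFree R (M ⧸ N)] :
    ∃ r : M →ₗ[R] N, ∀ x : N, r x = x := by
  obtain ⟨s, hs⟩ := N.mkQ.exists_rightInverse_of_surjective N.range_mkQ
  have hmem : ∀ x, x - s (N.mkQ x) ∈ N := fun x => by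
    rw [← Quotient.mk_eq_zero, ← N.mkQ_apply, map_sub, ← LinearMap.comp_apply, hs,
      LinearMap.id_apply, sub_self]
  refine ⟨(LinearMap.id - s ∘ₗ N.mkQ).codRestrict N hmem, fun x => ?_⟩
  ext
  simp [(Quotient.mk_eq_zero N).2 x.2]

section Unimodular

variable {V : Type*} [AddCommGroup V] [Module ℚ V]

theorem exists_mem_forall_apply_eq_of_dualLat_eq [FiniteDimensional ℚ V]
    {B : LinearMap.BilinForm ℚ V} (hB : B.Nondegenerate) {Γ : Submodule ℤ V}
    (hspan : span ℚ (Γ : Set V) = ⊤) (hfg : Γ.FG) (hunimod : dualLat B Γ = Γ)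
    (U : Submodule ℚ V) (f : V →ₗ[ℚ] ℚ) (hf : ∀ y ∈ Γ, y ∈ U → ∃ n : ℤ, f y = n) :
    ∃ v ∈ Γ, ∀ y ∈ Γ, y ∈ U → B v y = f y := by
  have : Module.Finite ℤ Γ := Module.Finite.iff_fg.2 hfg
  set N := (U.restrictScalars ℤ).comap Γ.subtype
  have := isTorsionFree_quotient_comap_restrictScalars Γ U
  obtain ⟨r, hr⟩ := N.exists_retraction_of_isTorsionFree_quotient
  obtain ⟨φ, hφ⟩ := exists_extend_of_span_eq_top hspan
    (f.restrictScalars ℤ ∘ₗ Γ.subtype ∘ₗ N.subtype ∘ₗ r)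
  have hBφ : ∀ γ : Γ, B ((B.toDual hB).symm φ) γ = f (r γ) := fun γ => by
    rw [apply_toDual_symm_apply, hφ]; rfl
  refine ⟨(B.toDual hB).symm φ, ?_, fun y hy hyU => ?_⟩
  · rw [← hunimod]
    refine ⟨hspan ▸ mem_top, fun y hy => ?_⟩
    rw [hBφ ⟨y, hy⟩]
    exact hf _ (r ⟨y, hy⟩ : Γ).2 (r ⟨y, hy⟩).2
  · rw [hBφ ⟨y, hy⟩, hr ⟨⟨y, hy⟩, hyU⟩]

end Unimodular

namespace LinearEquiv

variable {R V : Type*} [Ring R] [AddCommGroup V] [Module R V] {W Z : Submodule R V}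

noncomputable def extendOfIsCompl (h : W ≃ₗ[R] W) (hc : IsCompl W Z) : V ≃ₗ[R] V :=
  (prodEquivOfIsCompl W Z hc).symm ≪≫ₗ h.prodCongr (refl R Z) ≪≫ₗ prodEquivOfIsCompl W Z hc

variable (h : W ≃ₗ[R] W) (hc : IsCompl W Z)

@[simp]
theorem extendOfIsCompl_apply_left (w : W) : h.extendOfIsCompl hc w = h w := by
  simp [extendOfIsCompl]

@[simp]
theorem extendOfIsCompl_apply_right (z : Z) : h.extendOfIsCompl hc z = z := by
  simp [extendOfIsCompl]

theorem extendOfIsCompl_symm : (h.extendOfIsCompl hc).symm = h.symm.extendOfIsCompl hc :=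
  LinearMap.ext_on_codisjoint hc.codisjoint
    (fun x hx => by lift x to W using hx; simp [symm_apply_eq])
    (fun x hx => by lift x to Z using hx; simp [symm_apply_eq])

theorem ofSubmodules_extendOfIsCompl (hmap : W.map (h.extendOfIsCompl hc : V →ₗ[R] V) = W) :
    (h.extendOfIsCompl hc).ofSubmodules W W hmap = h := by
  ext
  simp

theorem extendOfIsCompl_ofSubmodules {g : V ≃ₗ[R] V} (hgZ : ∀ z ∈ Z, g z = z)
    (hmap : W.map (g : V →ₗ[R] V) = W) :
    (g.ofSubmodules W W hmap).extendOfIsCompl hc = g :=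
  LinearMap.ext_on_codisjoint hc.codisjoint
    (fun x hx => by lift x to W using hx; simp)
    (fun x hx => by lift x to Z using hx; simp [hgZ x x.2])

end LinearEquiv

section Stabilizer

variable {V : Type*} [AddCommGroup V] [Module ℚ V] {B : LinearMap.BilinForm ℚ V}
  {Γ : Submodule ℤ V} {Z : Submodule ℚ V}

theorem apply_add_add_eq_of_mem_orthogonal (hrefl : B.IsRefl) {w₁ w₂ z₁ z₂ : V}
    (hw₁ : w₁ ∈ B.orthogonal Z) (hw₂ : w₂ ∈ B.orthogonal Z) (hz₁ : z₁ ∈ Z) (hz₂ : z₂ ∈ Z) :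
    B (w₁ + z₁) (w₂ + z₂) = B w₁ w₂ + B z₁ z₂ := by
  simp only [map_add, LinearMap.add_apply, hw₂ z₁ hz₁, hrefl _ _ (hw₁ z₂ hz₂)]
  ring

theorem exists_add_mem_of_forall_int [FiniteDimensional ℚ V] (hB : B.Nondegenerate)
    (hspan : span ℚ (Γ : Set V) = ⊤) (hfg : Γ.FG) (hunimod : dualLat B Γ = Γ)
    (hc : IsCompl (B.orthogonal Z) Z)
    (hLnd : ∀ x ∈ B.orthogonal Z,
      (∀ y ∈ Γ ⊓ (B.orthogonal Z).restrictScalars ℤ, B x y = 0) → x = 0)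
    (x : V) (hx : x ∈ B.orthogonal Z)
    (hxL : ∀ y ∈ Γ ⊓ (B.orthogonal Z).restrictScalars ℤ, ∃ k : ℤ, B x y = k) :
    ∃ z ∈ Z, x + z ∈ Γ := by
  obtain ⟨v, hvΓ, hv⟩ := exists_mem_forall_apply_eq_of_dualLat_eq hB hspan hfg hunimod
    (B.orthogonal Z) (B x) fun y hy hyW => hxL y ⟨hy, hyW⟩
  obtain ⟨w, hw, z, hz, rfl⟩ := mem_sup.1 (hc.sup_eq_top ▸ mem_top : v ∈ B.orthogonal Z ⊔ Z)
  have hwx : w = x := by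
    refine sub_eq_zero.1 (hLnd _ (sub_mem hw hx) fun y hy => ?_)
    rw [map_sub, LinearMap.sub_apply, ← hv y hy.1 hy.2, map_add, LinearMap.add_apply,
      hy.2 z hz]
    ring
  exact ⟨z, hz, hwx ▸ hvΓ⟩

theorem StabCond.symm {g : V ≃ₗ[ℚ] V} (hg : StabCond B Γ Z g) : StabCond B Γ Z g.symm := by
  refine ⟨hg.2.1, by simpa using hg.1, fun x y => ?_, fun z hz => ?_⟩
  · rw [← hg.2.2.1, g.apply_symm_apply, g.apply_symm_apply]
  · rw [g.symm_apply_eq, hg.2.2.2 z hz]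

theorem StabCond.mapsTo_orthogonal {g : V ≃ₗ[ℚ] V} (hg : StabCond B Γ Z g) {x : V}
    (hx : x ∈ B.orthogonal Z) : g x ∈ B.orthogonal Z := fun z hz => by
  show B z (g x) = 0
  rw [← hg.2.2.2 z hz, hg.2.2.1]
  exact hx z hz

theorem StabCond.map_orthogonal {g : V ≃ₗ[ℚ] V} (hg : StabCond B Γ Z g) :
    (B.orthogonal Z).map (g : V →ₗ[ℚ] V) = B.orthogonal Z :=
  le_antisymm (map_le_iff_le_comap.2 fun _ hx => hg.mapsTo_orthogonal hx)
    fun x hx => ⟨g.symm x, hg.symm.mapsTo_orthogonal hx, g.apply_symm_apply x⟩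

theorem StabCond.discTrivCond_ofSubmodules {g : V ≃ₗ[ℚ] V} (hg : StabCond B Γ Z g)
    (hsurj : ∀ x ∈ B.orthogonal Z,
      (∀ y ∈ Γ ⊓ (B.orthogonal Z).restrictScalars ℤ, ∃ k : ℤ, B x y = k) →
      ∃ z ∈ Z, x + z ∈ Γ) :
    DiscTrivCond B (Γ ⊓ (B.orthogonal Z).restrictScalars ℤ) (B.orthogonal Z)
      (g.ofSubmodules _ _ hg.map_orthogonal) := by
  refine ⟨fun x hx => ⟨hg.1 _ hx.1, (g.ofSubmodules _ _ _ x).2⟩,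
    fun x hx => ⟨hg.2.1 _ hx.1, ((g.ofSubmodules _ _ _).symm x).2⟩,
    fun x y => hg.2.2.1 x y, fun x hx => ⟨?_, sub_mem (g.ofSubmodules _ _ _ x).2 x.2⟩⟩
  obtain ⟨z, hz, hxz⟩ := hsurj x x.2 hx
  have hsub : g x - x = g (x + z) - (x + z) := by
    rw [map_add, hg.2.2.2 z hz]
    abel
  rw [LinearEquiv.ofSubmodules_apply, hsub]
  exact sub_mem (hg.1 _ hxz) hxz

theorem DiscTrivCond.symm {L : Submodule ℤ V} {W : Submodule ℚ V} {h : W ≃ₗ[ℚ] W}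
    (hLW : L ≤ W.restrictScalars ℤ) (hh : DiscTrivCond B L W h) : DiscTrivCond B L W h.symm := by
  refine ⟨hh.2.1, by simpa using hh.1, fun x y => ?_, fun x hx => ?_⟩
  · rw [← hh.2.2.1, h.apply_symm_apply, h.apply_symm_apply]
  · have hdual : ∀ y ∈ L, ∃ k : ℤ, B (h.symm x) y = k := fun y hy => by
      rw [show y = ((⟨y, hLW hy⟩ : W) : V) from rfl, ← hh.2.2.1, h.apply_symm_apply]
      exact hx _ (hh.1 _ hy)
    simpa using neg_mem (hh.2.2.2 _ hdual)

theorem DiscTrivCond.extendOfIsCompl_mem {h : B.orthogonal Z ≃ₗ[ℚ] B.orthogonal Z}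
    (hc : IsCompl (B.orthogonal Z) Z) (hint : ∀ x ∈ Γ, ∀ y ∈ Γ, ∃ n : ℤ, B x y = n)
    (hh : DiscTrivCond B (Γ ⊓ (B.orthogonal Z).restrictScalars ℤ) (B.orthogonal Z) h)
    {v : V} (hv : v ∈ Γ) : h.extendOfIsCompl hc v ∈ Γ := by
  obtain ⟨⟨w, z⟩, rfl, -⟩ := existsUnique_add_of_isCompl_prod hc v
  have hdual : ∀ y ∈ Γ ⊓ (B.orthogonal Z).restrictScalars ℤ, ∃ k : ℤ, B w y = k :=
    fun y hy => by simpa [hy.2 z z.2] using hint _ hv y hy.1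
  have hext : h.extendOfIsCompl hc (w + z) = w + z + (h w - w) := by
    simp only [map_add, LinearEquiv.extendOfIsCompl_apply_left,
      LinearEquiv.extendOfIsCompl_apply_right]
    abel
  rw [hext]
  exact add_mem hv (hh.2.2.2 w hdual).1

theorem DiscTrivCond.stabCond_extendOfIsCompl {h : B.orthogonal Z ≃ₗ[ℚ] B.orthogonal Z}
    (hrefl : B.IsRefl) (hc : IsCompl (B.orthogonal Z) Z)
    (hint : ∀ x ∈ Γ, ∀ y ∈ Γ, ∃ n : ℤ, B x y = n)
    (hh : DiscTrivCond B (Γ ⊓ (B.orthogonal Z).restrictScalars ℤ) (B.orthogonal Z) h) :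
    StabCond B Γ Z (h.extendOfIsCompl hc) := by
  refine ⟨fun v hv => hh.extendOfIsCompl_mem hc hint hv, fun v hv => ?_, fun x y => ?_,
    fun z hz => h.extendOfIsCompl_apply_right hc ⟨z, hz⟩⟩
  · rw [LinearEquiv.extendOfIsCompl_symm]
    exact (hh.symm inf_le_right).extendOfIsCompl_mem hc hint hv
  · obtain ⟨⟨w₁, z₁⟩, rfl, -⟩ := existsUnique_add_of_isCompl_prod hc x
    obtain ⟨⟨w₂, z₂⟩, rfl, -⟩ := existsUnique_add_of_isCompl_prod hc y
    simp only [map_add (h.extendOfIsCompl hc), LinearEquiv.extendOfIsCompl_apply_left,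
      LinearEquiv.extendOfIsCompl_apply_right]
    rw [apply_add_add_eq_of_mem_orthogonal hrefl (h w₁).2 (h w₂).2 z₁.2 z₂.2,
      apply_add_add_eq_of_mem_orthogonal hrefl w₁.2 w₂.2 z₁.2 z₂.2, hh.2.2.1]

end Stabilizer

theorem stabilizer_iso_discriminant_trivial_automorphisms_general
    {V : Type*} [AddCommGroup V] [Module ℚ V] [FiniteDimensional ℚ V]
    (B : V →ₗ[ℚ] V →ₗ[ℚ] ℚ)
    (hsymm : ∀ x y : V, B x y = B y x)
    (hnd : ∀ x : V, (∀ y : V, B x y = 0) → x = 0)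
    (Γ : Submodule ℤ V)
    (hspan : Submodule.span ℚ (Γ : Set V) = ⊤)
    (hfg : Γ.FG)
    (hint : ∀ x ∈ Γ, ∀ y ∈ Γ, ∃ n : ℤ, B x y = (n : ℚ))
    (hunimod : dualLat B Γ = Γ)
    (Z : Submodule ℚ V)
    (LPi : Submodule ℤ V)
    -- `L_Π = Γ ∩ Z⊥` and `L^Π = Γ ∩ (L_Π)⊥`:
    (hLPi : ∀ x : V, x ∈ LPi ↔ (x ∈ Γ ∧ ∀ z ∈ Z, B x z = 0))
    -- `Z ⊆ L^Π ⊗ ℝ`; `L_Π` nondegenerate; `L_Π` and `L^Π` mutual complements: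
    (hLPind : ∀ x ∈ Submodule.span ℚ (LPi : Set V), (∀ y ∈ LPi, B x y = 0) → x = 0)
    (W : Submodule ℚ V) (hW : W = Submodule.span ℚ (LPi : Set V)) :
    ∃ Φ : {g : V ≃ₗ[ℚ] V // StabCond B Γ Z g} ≃
          {h : ↥W ≃ₗ[ℚ] ↥W // DiscTrivCond B LPi W h},
      (∀ (g : {g : V ≃ₗ[ℚ] V // StabCond B Γ Z g}) (x : ↥W),
          (↑((Φ g).1 x) : V) = g.1 (↑x : V)) ∧
      (∀ g₁ g₂ g₃ : {g : V ≃ₗ[ℚ] V // StabCond B Γ Z g},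
          g₃.1 = g₁.1 * g₂.1 → (Φ g₃).1 = (Φ g₁).1 * (Φ g₂).1) := by
  change LinearMap.BilinForm ℚ V at B
  have hB : B.Nondegenerate := .ofSeparatingLeft hnd
  have hrefl : B.IsRefl := fun x y hxy => by rwa [hsymm]
  obtain rfl : LPi = Γ ⊓ (B.orthogonal Z).restrictScalars ℤ := by
    ext x
    simp only [hLPi, mem_inf, restrictScalars_mem, mem_orthogonal_iff, hsymm _ x]
  obtain rfl : W = B.orthogonal Z := hW.trans (span_inf_restrictScalars_eq hspan _)
  rw [← hW] at hLPind
  have hc : IsCompl (B.orthogonal Z) Z := by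
    have hres : (B.restrict (B.orthogonal Z)).Nondegenerate := .ofSeparatingLeft fun x hx =>
      Subtype.ext (hLPind x x.2 fun y hy => hx ⟨y, hy.2⟩)
    simpa [orthogonal_orthogonal hB hrefl] using
      isCompl_orthogonal_of_restrict_nondegenerate hrefl hres
  have hsurj := exists_add_mem_of_forall_int hB hspan hfg hunimod hc hLPind
  refine ⟨⟨fun g => ⟨_, g.2.discTrivCond_ofSubmodules hsurj⟩,
      fun h => ⟨_, h.2.stabCond_extendOfIsCompl hrefl hc hint⟩,
      fun g => Subtype.ext (LinearEquiv.extendOfIsCompl_ofSubmodules hc g.2.2.2.2 _),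
      fun h => Subtype.ext (LinearEquiv.ofSubmodules_extendOfIsCompl _ _ _)⟩,
    fun g x => rfl, fun g₁ g₂ g₃ h₃ => ?_⟩
  ext x
  simp [h₃]

/-- The group of symmetries of `Γ` fixing `Z` pointwise is isomorphic to the group
`O⁰(L_Π)` of automorphisms of `L_Π = Γ ∩ Z⊥` acting trivially on the discriminant
group `(L_Π)*/L_Π`; the isomorphism is given by restriction to `L_Π` and is
compatible with composition. -/
theorem stabilizer_iso_discriminant_trivial_automorphisms
    {V : Type*} [AddCommGroup V] [Module ℚ V] [FiniteDimensional ℚ V]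
    (B : V →ₗ[ℚ] V →ₗ[ℚ] ℚ)
    (hsymm : ∀ x y : V, B x y = B y x)
    (hnd : ∀ x : V, (∀ y : V, B x y = 0) → x = 0)
    (Γ : Submodule ℤ V)
    (hspan : Submodule.span ℚ (Γ : Set V) = ⊤)
    (hfg : Γ.FG)
    (hint : ∀ x ∈ Γ, ∀ y ∈ Γ, ∃ n : ℤ, B x y = (n : ℚ))
    (heven : ∀ x ∈ Γ, ∃ n : ℤ, B x x = 2 * (n : ℚ))
    (hunimod : dualLat B Γ = Γ)
    (Z : Submodule ℚ V)
    (LPi Lup : Submodule ℤ V)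
    -- `L_Π = Γ ∩ Z⊥` and `L^Π = Γ ∩ (L_Π)⊥`:
    (hLPi : ∀ x : V, x ∈ LPi ↔ (x ∈ Γ ∧ ∀ z ∈ Z, B x z = 0))
    (hLup : ∀ x : V, x ∈ Lup ↔ (x ∈ Γ ∧ ∀ y ∈ LPi, B x y = 0))
    -- `Z ⊆ L^Π ⊗ ℝ`; `L_Π` nondegenerate; `L_Π` and `L^Π` mutual complements:
    (hZW : Z ≤ Submodule.span ℚ (Lup : Set V))
    (hLPind : ∀ x ∈ Submodule.span ℚ (LPi : Set V), (∀ y ∈ LPi, B x y = 0) → x = 0)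
    (hmut : ∀ x : V, x ∈ LPi ↔ (x ∈ Γ ∧ ∀ y ∈ Lup, B x y = 0))
    (W : Submodule ℚ V) (hW : W = Submodule.span ℚ (LPi : Set V)) :
    ∃ Φ : {g : V ≃ₗ[ℚ] V // StabCond B Γ Z g} ≃
          {h : ↥W ≃ₗ[ℚ] ↥W // DiscTrivCond B LPi W h},
      (∀ (g : {g : V ≃ₗ[ℚ] V // StabCond B Γ Z g}) (x : ↥W),
          (↑((Φ g).1 x) : V) = g.1 (↑x : V)) ∧
      (∀ g₁ g₂ g₃ : {g : V ≃ₗ[ℚ] V // StabCond B Γ Z g},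
          g₃.1 = g₁.1 * g₂.1 → (Φ g₃).1 = (Φ g₁).1 * (Φ g₂).1) :=
  stabilizer_iso_discriminant_trivial_automorphisms_general B hsymm hnd Γ hspan hfg hint hunimod Z
    LPi hLPi hLPind W hW
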